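/- Let (b_n)_{n≥1} be the paperfolding sequence. Then 28·∑_{n≥1} (2b_n − 1)/n³ = −π³. -/

import Mathlib

/-- Even-index Euler numbers: `E2 k = E_{2k}`, where `1/cosh t = ∑ E_n t^n/n!`
(equivalently, `E_0 = 1`, odd-index Euler numbers vanish, and
`∑_{j≤n} C(2n,2j) E_{2j} = 0` for `n ≥ 1`). -/
def E2 : ℕ → ℤ
  | 0 => 1
  | n + 1 => -∑ k ∈ (Finset.range (n+1)).attach,
      ((2*(n+1)).choose (2*k.1) : ℤ) * E2 k.1
decreasing_by exact Finset.mem_range.mp k.2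

/-- Thue–Morse sequence: `tm 0 = 0`, `tm (2n) = tm n`, `tm (2n+1) = 1 - tm n`. -/
def tm : ℕ → ℕ
  | 0 => 0
  | n + 1 => if (n+1) % 2 = 0 then tm ((n+1)/2) else 1 - tm ((n+1)/2)
decreasing_by all_goals exact Nat.div_lt_self (Nat.succ_pos n) one_lt_two

/-- Paperfolding (dragon-curve) sequence: `pf (2n) = pf n`, `pf (4n+1) = 0`,
`pf (4n+3) = 1` (with `pf 0 = 0`). -/
def pf : ℕ → ℕ
  | 0 => 0
  | n + 1 => if (n+1) % 2 = 0 then pf ((n+1)/2) else if (n+1) % 4 = 1 then 0 else 1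
decreasing_by exact Nat.div_lt_self (Nat.succ_pos n) one_lt_two

open Real

lemma pf_two_mul (n : ℕ) : pf (2 * n) = pf n := by
  match n with
  | 0 => rfl
  | n + 1 =>
    rw [show 2 * (n+1) = (2*n+1)+1 by ring, pf]
    have h1 : (2*n+1+1) % 2 = 0 := by omega
    have h2 : (2*n+1+1)/2 = n+1 := by omega
    rw [if_pos h1, h2]

lemma pf_four_mul_add_one (k : ℕ) : pf (4 * k + 1) = 0 := by
  rw [show 4*k+1 = (4*k)+1 from rfl, pf]
  have h1 : (4*k+1) % 2 ≠ 0 := by omega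
  have h2 : (4*k+1) % 4 = 1 := by omega
  rw [if_neg h1, if_pos h2]

lemma pf_four_mul_add_three (k : ℕ) : pf (4 * k + 3) = 1 := by
  rw [show 4*k+3 = (4*k+2)+1 from rfl, pf]
  have h1 : (4*k+2+1) % 2 ≠ 0 := by omega
  have h2 : (4*k+2+1) % 4 ≠ 1 := by omega
  rw [if_neg h1, if_neg h2]

lemma pf_zero_or_one (n : ℕ) : pf n = 0 ∨ pf n = 1 := by
  induction n using Nat.strong_induction_on with
  | _ n ih =>
    match n with
    | 0 => rw [pf]; exact Or.inl rfl
    | n + 1 =>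
      rw [pf]
      split
      · exact ih _ (Nat.div_lt_self (Nat.succ_pos n) one_lt_two)
      · split
        · exact Or.inl rfl
        · exact Or.inr rfl

noncomputable def paperA (n : ℕ) : ℝ := (2 * (pf n : ℝ) - 1) / (n : ℝ) ^ 3

lemma paperA_two_mul (n : ℕ) : paperA (2 * n) = paperA n / 8 := by
  unfold paperA
  rw [pf_two_mul]
  push_cast
  rw [div_div]
  congr 1
  ring

lemma summable_paperA : Summable paperA := by
  apply Summable.of_norm_bounded (g := fun n : ℕ => 1 / (n : ℝ) ^ 3)
    (summable_one_div_nat_pow.mpr (by norm_num))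
  intro n
  unfold paperA
  rcases pf_zero_or_one n with h | h <;> rw [h] <;>
    simp [abs_div, abs_of_nonneg (by positivity : (0:ℝ) ≤ (n:ℝ)^3)] <;> norm_num

lemma paperA_odd (k : ℕ) :
    paperA (2 * k + 1) = -(1 / ((2*k+1 : ℕ) : ℝ) ^ 3 * Real.sin (π * ((2*k+1 : ℕ) : ℝ) / 2)) := by
  rcases Nat.even_or_odd k with ⟨j, hj⟩ | ⟨j, hj⟩
  · subst hj
    have h1 : 2 * (j + j) + 1 = 4 * j + 1 := by ring
    rw [h1]
    unfold paperA
    rw [pf_four_mul_add_one]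
    have hs : π * ((4*j+1 : ℕ) : ℝ) / 2 = π / 2 + (j : ℕ) * (2 * π) := by push_cast; ring
    rw [hs, Real.sin_add_nat_mul_two_pi, Real.sin_pi_div_two]
    push_cast
    have : ((4:ℝ)*j+1) ≠ 0 := by positivity
    field_simp
    norm_num
  · subst hj
    have h1 : 2 * (2*j + 1) + 1 = 4 * j + 3 := by ring
    rw [h1]
    unfold paperA
    rw [pf_four_mul_add_three]
    have hs : π * ((4*j+3 : ℕ) : ℝ) / 2 = (π / 2 + π) + (j : ℕ) * (2 * π) := by push_cast; ring
    rw [hs, Real.sin_add_nat_mul_two_pi, Real.sin_add_pi, Real.sin_pi_div_two]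
    push_cast
    have : ((4:ℝ)*j+3) ≠ 0 := by positivity
    field_simp
    norm_num

lemma hasSum_paperA : HasSum paperA (-π ^ 3 / 28) := by
  have hA := summable_paperA.hasSum
  set S := ∑' n, paperA n with hSdef
  set F : ℕ → ℝ := fun n : ℕ => (1 : ℝ) / (n : ℝ) ^ 3 * Real.sin (π * n / 2) with hF
  have hf : HasSum F (π ^ 3 / 32) := hasSum_L_function_mod_four_eval_three
  have heven0 : HasSum (fun k : ℕ => F (2*k)) 0 := by
    have : (fun k : ℕ => F (2*k)) = fun _ => (0 : ℝ) := by
      funext k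
      have h2 : π * ((2*k : ℕ) : ℝ) / 2 = (k : ℕ) * π := by push_cast; ring
      simp only [hF, h2, Real.sin_nat_mul_pi, mul_zero]
    rw [this]
    exact hasSum_zero
  have hinj : Function.Injective (fun k : ℕ => 2*k+1) := fun a b h => by dsimp only at h; omega
  have hoddsummable : Summable (fun k : ℕ => F (2*k+1)) := by
    have := hf.summable.comp_injective hinj
    simpa only [Function.comp_def] using this
  have hoddf : HasSum (fun k : ℕ => F (2*k+1)) (π ^ 3 / 32) := by
    have htot : HasSum F (0 + ∑' k, F (2*k+1)) :=
      HasSum.even_add_odd heven0 hoddsummable.hasSum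
    have h := hf.unique htot
    rw [zero_add] at h
    rw [h]
    exact hoddsummable.hasSum
  have hOddA : HasSum (fun k : ℕ => paperA (2*k+1)) (-(π ^ 3 / 32)) := by
    have heq : (fun k : ℕ => paperA (2*k+1)) = fun k : ℕ => -(F (2*k+1)) := by
      funext k
      exact paperA_odd k
    rw [heq]
    exact hoddf.neg
  have hEvenA : HasSum (fun k : ℕ => paperA (2*k)) (S / 8) := by
    have heq : (fun k : ℕ => paperA (2*k)) = fun k : ℕ => paperA k / 8 :=
      funext paperA_two_mul
    rw [heq]
    exact hA.div_const 8
  have hA' : HasSum paperA (S / 8 + -(π ^ 3 / 32)) := HasSum.even_add_odd hEvenA hOddA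
  have hSval : S = S / 8 + -(π ^ 3 / 32) := hA.unique hA'
  have hfin : S = -π ^ 3 / 28 := by linarith
  rw [← hfin]
  exact hA

theorem paperfolding_cube_pi :
    28 * ∑' n : ℕ, (2 * (pf (n+1) : ℝ) - 1) / ((n:ℝ) + 1) ^ 3 = -Real.pi ^ 3 := by
  have hsum := summable_paperA
  have h0 : paperA 0 = 0 := by
    unfold paperA
    norm_num
  have hshift := Summable.tsum_eq_zero_add hsum
  rw [h0, zero_add] at hshift
  have heq : (fun n : ℕ => (2 * (pf (n+1) : ℝ) - 1) / ((n:ℝ) + 1) ^ 3)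
      = fun n : ℕ => paperA (n+1) := by
    funext n
    unfold paperA
    push_cast
    ring_nf
  calc 28 * ∑' n : ℕ, (2 * (pf (n+1) : ℝ) - 1) / ((n:ℝ) + 1) ^ 3
      = 28 * ∑' n : ℕ, paperA (n+1) := by rw [heq]
    _ = 28 * ∑' n, paperA n := by rw [← hshift]
    _ = 28 * (-π ^ 3 / 28) := by rw [hasSum_paperA.tsum_eq]
    _ = -Real.pi ^ 3 := by ring
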